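/- arXiv:2106.13357 — 4 statements merged into one kernel-verified Lean document; each statement's English description precedes it below -/
import Mathlib

section
/- Every finite simple graph G admits an in-out-proper orientation D such that |d_D^±(v)| ≤ Δ(G) for every vertex v; i.e., the in-out-proper orientation number χ↔(G) is well-defined and satisfies χ↔(G) ≤ Δ(G). -/
/-- An orientation of a simple graph `G`: for each edge `{u,v}` exactly one of the
two directions is chosen. `dir u v = true` means the arc goes from `u` to `v`. -/
structure Orient {V : Type*} (G : SimpleGraph V) where
  dir : V → V → Bool
  consistent : ∀ u v, G.Adj u v → dir u v = !dir v u

variable {V : Type*}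

/-- In-degree of `v` in the orientation `D`. -/
def inDeg [Fintype V] (G : SimpleGraph V) [DecidableRel G.Adj] (D : Orient G) (v : V) : ℕ :=
  (Finset.univ.filter (fun u => G.Adj u v ∧ D.dir u v = true)).card

/-- Out-degree of `v` in the orientation `D`. -/
def outDeg [Fintype V] (G : SimpleGraph V) [DecidableRel G.Adj] (D : Orient G) (v : V) : ℕ :=
  (Finset.univ.filter (fun u => G.Adj u v ∧ D.dir v u = true)).card

/-- In-out-degree `d_D^±(v) = d_D^-(v) - d_D^+(v)`. -/
def ioDeg [Fintype V] (G : SimpleGraph V) [DecidableRel G.Adj] (D : Orient G) (v : V) : ℤ :=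
  (inDeg G D v : ℤ) - (outDeg G D v : ℤ)

/-- An orientation is in-out-proper if adjacent vertices have distinct in-out-degrees. -/
def IsIOProper [Fintype V] (G : SimpleGraph V) [DecidableRel G.Adj] (D : Orient G) : Prop :=
  ∀ u v, G.Adj u v → ioDeg G D u ≠ ioDeg G D v

open Finset

namespace Orient

variable {G : SimpleGraph V} (D : Orient G)

def flip [DecidableEq V] (u v : V) : Orient G where
  dir a b := if s(a, b) = s(u, v) then !D.dir a b else D.dir a b
  consistent a b hab := by
    rw [Sym2.eq_swap (a := b)]
    split_ifs <;> simp [D.consistent a b hab]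

lemma flip_comm [DecidableEq V] (u v : V) : D.flip u v = D.flip v u := by
  simp only [flip, Sym2.eq_swap (a := u)]

/-- `+1` if the edge `ab` is oriented into `b`, `-1` if out of `b`, and `0` if `a, b` are not
adjacent: the contribution of `a` to `ioDeg G D b`. -/
def inSign [DecidableRel G.Adj] (a b : V) : ℤ :=
  if G.Adj a b then (if D.dir a b then 1 else -1) else 0

variable [DecidableRel G.Adj]

lemma inSign_swap (a b : V) : D.inSign b a = -D.inSign a b := by
  by_cases h : G.Adj a b
  · cases hab : D.dir a b <;> simp [inSign, h, h.symm, D.consistent b a h.symm, hab]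
  · have h' : ¬G.Adj b a := fun h' => h h'.symm
    simp [inSign, h, h']

lemma abs_inSign (a b : V) : |D.inSign a b| = if G.Adj a b then 1 else 0 := by
  unfold inSign
  split_ifs <;> simp

lemma sq_inSign_of_adj {a b : V} (h : G.Adj a b) : D.inSign a b ^ 2 = 1 := by
  rw [← sq_abs, abs_inSign, if_pos h, one_pow]

lemma inSign_flip [DecidableEq V] (u v a b : V) :
    (D.flip u v).inSign a b = if s(a, b) = s(u, v) then -D.inSign a b else D.inSign a b := by
  unfold inSign flip
  split_ifs <;> simp_all

end Orient

section IODegree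

variable [Fintype V] {G : SimpleGraph V} [DecidableRel G.Adj] (D : Orient G)

lemma ioDeg_eq_sum_inSign (v : V) : ioDeg G D v = ∑ a, D.inSign a v := by
  have hout : outDeg G D v = #{a | G.Adj a v ∧ D.dir a v = false} := by
    refine congrArg card (filter_congr fun a _ => and_congr_right fun h => ?_)
    simp [D.consistent v a h.symm]
  simp only [ioDeg, inDeg, hout, card_filter, Nat.cast_sum, ← sum_sub_distrib]
  refine sum_congr rfl fun a _ => ?_
  unfold Orient.inSign
  split_ifs <;> simp_all

lemma abs_ioDeg_le_degree (v : V) : |ioDeg G D v| ≤ G.degree v := by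
  calc |ioDeg G D v| ≤ ∑ a, |D.inSign a v| := by
        rw [ioDeg_eq_sum_inSign]; exact abs_sum_le_sum_abs _ _
    _ = G.degree v := by
        simp only [Orient.abs_inSign, sum_boole, ← G.card_neighborFinset_eq_degree,
          SimpleGraph.neighborFinset_eq_filter, G.adj_comm]

variable [DecidableEq V]

lemma ioDeg_flip_of_ne {u v w : V} (hwu : w ≠ u) (hwv : w ≠ v) :
    ioDeg G (D.flip u v) w = ioDeg G D w := by
  simp only [ioDeg_eq_sum_inSign, Orient.inSign_flip]
  refine sum_congr rfl fun a _ => if_neg ?_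
  rw [Sym2.eq_iff]
  tauto

lemma ioDeg_flip_right (u v : V) : ioDeg G (D.flip u v) v = ioDeg G D v - 2 * D.inSign u v := by
  have hsplit (E : Orient G) : ioDeg G E v = E.inSign u v + ∑ a ∈ univ.erase u, E.inSign a v := by
    rw [ioDeg_eq_sum_inSign, ← add_sum_erase _ _ (mem_univ u)]
  have hrest : ∑ a ∈ univ.erase u, (D.flip u v).inSign a v = ∑ a ∈ univ.erase u, D.inSign a v := by
    refine sum_congr rfl fun a ha => ?_
    refine (Orient.inSign_flip D u v a v).trans (if_neg ?_)
    rw [Sym2.eq_iff]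
    rintro (⟨rfl, -⟩ | ⟨rfl, rfl⟩) <;> simp at ha
  rw [hsplit, hsplit, hrest, Orient.inSign_flip, if_pos rfl]
  ring

lemma ioDeg_flip_left (u v : V) : ioDeg G (D.flip u v) u = ioDeg G D u + 2 * D.inSign u v := by
  rw [D.flip_comm, ioDeg_flip_right, D.inSign_swap]
  ring

lemma sum_sq_ioDeg_flip {u v : V} (huv : u ≠ v) :
    ∑ w, ioDeg G (D.flip u v) w ^ 2 =
      ∑ w, ioDeg G D w ^ 2 + 4 * D.inSign u v * (ioDeg G D u - ioDeg G D v + 2 * D.inSign u v) := by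
  rw [← sub_eq_iff_eq_add', ← sum_sub_distrib,
    Fintype.sum_eq_add u v huv fun w ⟨hwu, hwv⟩ => by rw [ioDeg_flip_of_ne D hwu hwv, sub_self],
    ioDeg_flip_left, ioDeg_flip_right]
  ring

end IODegree

instance Orient.instFinite [Finite V] {G : SimpleGraph V} : Finite (Orient G) :=
  Finite.of_injective Orient.dir fun D₁ D₂ h => by cases D₁; cases D₂; congr

instance Orient.instNonempty {G : SimpleGraph V} : Nonempty (Orient G) := by
  classical
  let : LinearOrder V := linearOrderOfSTO WellOrderingRel
  refine ⟨⟨fun a b => decide (a < b), fun a b hab => ?_⟩⟩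
  rcases (G.ne_of_adj hab).lt_or_gt with h | h <;> simp [h, h.not_gt]

/-- An orientation maximising `∑ v, ioDeg v ^ 2` is in-out-proper: reversing an edge between two
vertices of equal in-out-degree would increase the sum by `8`. -/
lemma exists_isIOProper [Fintype V] (G : SimpleGraph V) [DecidableRel G.Adj] :
    ∃ D : Orient G, IsIOProper G D := by
  classical
  obtain ⟨D, hmax⟩ := Finite.exists_max fun D : Orient G => ∑ w, ioDeg G D w ^ 2
  refine ⟨D, fun u v huv heq => ?_⟩
  have hflip := sum_sq_ioDeg_flip D (G.ne_of_adj huv)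
  rw [heq, sub_self, zero_add] at hflip
  nlinarith [hmax (D.flip u v), D.sq_inSign_of_adj huv]

/-- Every finite simple graph has an in-out-proper orientation with all absolute
in-out-degrees at most `Δ(G)`; i.e. `χ↔(G) ≤ Δ(G)`. -/
theorem stmt_6 [Fintype V] (G : SimpleGraph V) [DecidableRel G.Adj] :
    ∃ D : Orient G, IsIOProper G D ∧ ∀ v, |ioDeg G D v| ≤ (G.maxDegree : ℤ) := by
  obtain ⟨D, hD⟩ := exists_isIOProper G
  refine ⟨D, hD, fun v => (abs_ioDeg_le_degree D v).trans ?_⟩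
  exact_mod_cast G.degree_le_maxDegree v
end

section
/- For every cycle C_n with n ≥ 3, the in-out-proper orientation number equals 2: every in-out-proper orientation of C_n has some vertex with in-out-degree of absolute value 2, and there exists an in-out-proper orientation with all in-out-degrees in {-2, 0, 2}. -/
variable {V : Type*}

/-!
At a vertex of degree `2` the in-out-degree is `2 - 2 * outDeg ∈ {-2, 0, 2}`; if no vertex of a
`2`-regular graph has in-out-degree `±2`, all of them are `0` and no edge is properly oriented.
Conversely, in a regular graph, directing every edge towards the larger colour of a proper
`3`-colouring is in-out-proper: every edge has an endpoint of colour `0`, a source, or of colour `2`,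
a sink, and the edge itself keeps its other endpoint from being a source, resp. a sink. Cycles are
`3`-colourable.
-/

open SimpleGraph Finset

section

variable [Fintype V] {G : SimpleGraph V} [DecidableRel G.Adj]

theorem inDeg_add_outDeg (D : Orient G) (v : V) : inDeg G D v + outDeg G D v = G.degree v := by
  have hout : outDeg G D v = #{u | G.Adj u v ∧ ¬D.dir u v = true} := by
    refine congrArg card (filter_congr fun u _ => and_congr_right fun h => ?_)
    simp [D.consistent v u h.symm]
  rw [inDeg, hout, ← filter_filter, ← filter_filter, card_filter_add_card_filter_not,
    ← card_neighborFinset_eq_degree, neighborFinset_eq_filter]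
  simp only [G.adj_comm]

theorem ioDeg_eq_degree_sub_two_mul_outDeg (D : Orient G) (v : V) :
    ioDeg G D v = G.degree v - 2 * outDeg G D v := by
  have := inDeg_add_outDeg D v
  rw [ioDeg]
  omega

theorem ioDeg_eq_degree_iff (D : Orient G) (v : V) :
    ioDeg G D v = G.degree v ↔ outDeg G D v = 0 := by
  have := inDeg_add_outDeg D v
  rw [ioDeg]
  omega

theorem ioDeg_eq_neg_degree_iff (D : Orient G) (v : V) :
    ioDeg G D v = -G.degree v ↔ inDeg G D v = 0 := by
  have := inDeg_add_outDeg D v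
  rw [ioDeg]
  omega

theorem ioDeg_mem_of_degree_eq_two (D : Orient G) {v : V} (hv : G.degree v = 2) :
    ioDeg G D v ∈ ({-2, 0, 2} : Set ℤ) := by
  have hsum := inDeg_add_outDeg D v
  rw [ioDeg_eq_degree_sub_two_mul_outDeg, hv]
  have : outDeg G D v ≤ 2 := by omega
  interval_cases outDeg G D v <;> simp

theorem inDeg_pos_of_dir (D : Orient G) {u v : V} (huv : G.Adj u v) (hd : D.dir u v = true) :
    0 < inDeg G D v :=
  card_pos.mpr ⟨u, mem_filter.mpr ⟨mem_univ u, huv, hd⟩⟩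

theorem outDeg_pos_of_dir (D : Orient G) {u v : V} (huv : G.Adj u v) (hd : D.dir u v = true) :
    0 < outDeg G D u :=
  card_pos.mpr ⟨v, mem_filter.mpr ⟨mem_univ v, huv.symm, hd⟩⟩

theorem exists_abs_ioDeg_eq_two [Nonempty V] (hG : G.IsRegularOfDegree 2) (D : Orient G)
    (hD : IsIOProper G D) : ∃ v, |ioDeg G D v| = 2 := by
  by_contra! h
  have hzero (v : V) : ioDeg G D v = 0 := by
    obtain hneg | h0 | hpos := ioDeg_mem_of_degree_eq_two D (hG v)
    · exact absurd (by rw [hneg]; norm_num) (h v)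
    · exact h0
    · exact absurd (by rw [hpos]; norm_num) (h v)
  obtain ⟨v⟩ := ‹Nonempty V›
  obtain ⟨u, hvu⟩ := G.degree_pos_iff_exists_adj v |>.mp (by rw [hG v]; norm_num)
  exact hD v u hvu (by rw [hzero, hzero])

def Orient.ofColoring {α : Type*} [LinearOrder α] (C : G.Coloring α) : Orient G where
  dir u v := decide (C u < C v)
  consistent u v h := by
    rcases (C.valid h).lt_or_gt with hlt | hlt <;> simp [hlt, hlt.le]

theorem inDeg_ofColoring_eq_zero {α : Type*} [LinearOrder α] (C : G.Coloring α) {v : V}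
    (hv : ∀ u, G.Adj u v → C v < C u) :
    inDeg G (Orient.ofColoring C) v = 0 :=
  card_eq_zero.mpr <| filter_eq_empty_iff.mpr fun u _ ⟨h, hd⟩ =>
    (hv u h).not_gt (of_decide_eq_true hd)

theorem outDeg_ofColoring_eq_zero {α : Type*} [LinearOrder α] (C : G.Coloring α) {v : V}
    (hv : ∀ u, G.Adj u v → C u < C v) :
    outDeg G (Orient.ofColoring C) v = 0 :=
  card_eq_zero.mpr <| filter_eq_empty_iff.mpr fun u _ ⟨h, hd⟩ =>
    (hv u h).not_gt (of_decide_eq_true hd)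

theorem isIOProper_ofColoring {d : ℕ} (hG : G.IsRegularOfDegree d) (C : G.Coloring (Fin 3)) :
    IsIOProper G (Orient.ofColoring C) := by
  intro u v huv heq
  wlog hlt : C u < C v generalizing u v
  · exact this v u huv.symm heq.symm ((C.valid huv).symm.lt_of_le (not_lt.mp hlt))
  have hdir : (Orient.ofColoring C).dir u v = true := decide_eq_true hlt
  obtain hu0 | hv2 : C u = 0 ∨ C v = 2 := by omega
  · have hsource : ioDeg G (Orient.ofColoring C) u = -d := by
      rw [← hG u, ioDeg_eq_neg_degree_iff]
      exact inDeg_ofColoring_eq_zero C fun w hw => by have := C.valid hw; omega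
    have hv : ioDeg G (Orient.ofColoring C) v ≠ -d := by
      rw [← hG v, Ne, ioDeg_eq_neg_degree_iff]
      exact (inDeg_pos_of_dir _ huv hdir).ne'
    exact hv (heq ▸ hsource)
  · have hsink : ioDeg G (Orient.ofColoring C) v = d := by
      rw [← hG v, ioDeg_eq_degree_iff]
      exact outDeg_ofColoring_eq_zero C fun w hw => by have := C.valid hw; omega
    have hu : ioDeg G (Orient.ofColoring C) u ≠ d := by
      rw [← hG u, Ne, ioDeg_eq_degree_iff]
      exact (outDeg_pos_of_dir _ huv hdir).ne'
    exact hu (heq.symm ▸ hsink)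

end

/-- For every cycle `C_n` (`n ≥ 3`), `χ↔(C_n) = 2`. -/
theorem stmt_7 (n : ℕ) (hn : 3 ≤ n) [DecidableRel (SimpleGraph.cycleGraph n).Adj] :
    (∀ D : Orient (SimpleGraph.cycleGraph n), IsIOProper _ D →
      ∃ v, |ioDeg (SimpleGraph.cycleGraph n) D v| = 2) ∧
    (∃ D : Orient (SimpleGraph.cycleGraph n), IsIOProper _ D ∧
      ∀ v, ioDeg (SimpleGraph.cycleGraph n) D v ∈ ({-2, 0, 2} : Set ℤ)) := by
  obtain ⟨m, rfl⟩ : ∃ m, n = m + 3 := ⟨n - 3, by omega⟩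
  have hG : (cycleGraph (m + 3)).IsRegularOfDegree 2 := fun v => by
    convert cycleGraph_degree_three_le
  exact ⟨exists_abs_ioDeg_eq_two hG,
    ⟨Orient.ofColoring (cycleGraph.tricoloring (m + 3) (by omega)), isIOProper_ofColoring hG _,
      fun _ => ioDeg_mem_of_degree_eq_two _ (hG _)⟩⟩
end

section
/- For the complete graph K_n, every in-out-proper orientation contains a vertex whose in-out-degree has absolute value n-1; hence the in-out-proper orientation number of K_n equals n-1. -/
variable {V : Type*}

/-! In any orientation of `K_n` a vertex of in-degree `d` has in-out-degree `2d - (n-1)`, so an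
in-out-proper orientation has `n` pairwise distinct in-degrees in `[0, n-1]`; some vertex therefore has
in-degree `n-1`, i.e. in-out-degree `n-1`. Conversely the transitive tournament, with arcs from smaller to
larger vertices, has in-degrees `0, 1, …, n-1` and is in-out-proper. -/

open Finset

namespace Orient

variable [Fintype V] {G : SimpleGraph V} [DecidableRel G.Adj] (D : Orient G)

theorem inDeg_add_outDeg (v : V) : inDeg G D v + outDeg G D v = G.degree v := by
  have hout : outDeg G D v = #{u | G.Adj u v ∧ ¬D.dir u v = true} := by
    refine congrArg Finset.card (filter_congr fun u _ => and_congr_right fun huv => ?_)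
    rw [D.consistent v u huv.symm]
    simp
  rw [inDeg, hout, ← filter_filter, ← filter_filter,
    card_filter_add_card_filter_not, SimpleGraph.degree, SimpleGraph.neighborFinset_eq_filter]
  simp only [SimpleGraph.adj_comm]

theorem ioDeg_eq (v : V) : ioDeg G D v = 2 * (inDeg G D v : ℤ) - G.degree v := by
  have := D.inDeg_add_outDeg v
  rw [ioDeg]
  omega

theorem natAbs_ioDeg_le_degree (v : V) : (ioDeg G D v).natAbs ≤ G.degree v := by
  have := D.inDeg_add_outDeg v
  rw [ioDeg]
  omega

theorem ioDeg_eq_ioDeg_iff {u v : V} (h : G.degree u = G.degree v) :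
    ioDeg G D u = ioDeg G D v ↔ inDeg G D u = inDeg G D v := by
  rw [D.ioDeg_eq, D.ioDeg_eq, h]
  omega

end Orient

section Complete

variable [Fintype V] [DecidableEq V]

theorem IsIOProper.inDeg_injective {D : Orient (⊤ : SimpleGraph V)} (hD : IsIOProper ⊤ D) :
    Function.Injective (inDeg ⊤ D) := by
  intro u v huv
  by_contra hne
  exact hD u v hne ((D.ioDeg_eq_ioDeg_iff (by simp)).2 huv)

theorem IsIOProper.exists_inDeg_eq_card_sub_one [Nonempty V] {D : Orient (⊤ : SimpleGraph V)}
    (hD : IsIOProper ⊤ D) : ∃ v, inDeg ⊤ D v = Fintype.card V - 1 := by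
  have hmaps : Set.MapsTo (inDeg ⊤ D) (univ : Finset V) (range (Fintype.card V)) := by
    intro v _
    have := D.inDeg_add_outDeg v
    simp only [SimpleGraph.complete_graph_degree] at this
    simp only [coe_range, Set.mem_Iio]
    have := Fintype.card_pos (α := V)
    omega
  have hsurj := surjOn_of_injOn_of_card_le _ hmaps hD.inDeg_injective.injOn (by simp)
  obtain ⟨v, -, hv⟩ := hsurj (by simp [Fintype.card_pos] : Fintype.card V - 1 ∈ _)
  exact ⟨v, hv⟩

theorem IsIOProper.exists_natAbs_ioDeg_eq [Nonempty V] {D : Orient (⊤ : SimpleGraph V)}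
    (hD : IsIOProper ⊤ D) : ∃ v, (ioDeg ⊤ D v).natAbs = Fintype.card V - 1 := by
  obtain ⟨v, hv⟩ := hD.exists_inDeg_eq_card_sub_one
  refine ⟨v, ?_⟩
  rw [D.ioDeg_eq, hv, SimpleGraph.complete_graph_degree]
  omega

end Complete

namespace Orient

variable [LinearOrder V]

def ofLT : Orient (⊤ : SimpleGraph V) where
  dir u v := decide (u < v)
  consistent u v huv := by
    rcases huv.lt_or_gt with h | h <;> simp [h, h.not_gt]

variable [Fintype V]

theorem inDeg_ofLT (v : V) : inDeg ⊤ ofLT v = #{u | u < v} := by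
  refine congrArg card (filter_congr fun u _ => ?_)
  simpa [ofLT] using ne_of_lt

theorem strictMono_inDeg_ofLT :
    StrictMono (inDeg ⊤ (ofLT : Orient (⊤ : SimpleGraph V))) := by
  intro u v huv
  simp only [inDeg_ofLT]
  refine card_lt_card ⟨fun w hw => ?_, fun hsub => ?_⟩
  · simp only [mem_filter, mem_univ, true_and] at hw ⊢
    exact hw.trans huv
  · exact lt_irrefl u (mem_filter.1 (hsub (mem_filter.2 ⟨mem_univ u, huv⟩))).2

theorem isIOProper_ofLT : IsIOProper ⊤ (ofLT : Orient (⊤ : SimpleGraph V)) := by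
  intro u v huv
  rw [Ne, ioDeg_eq_ioDeg_iff _ (by simp)]
  exact strictMono_inDeg_ofLT.injective.ne huv

end Orient

/-- For the complete graph `K_n`, every in-out-proper orientation has a vertex of
absolute in-out-degree `n-1`, and `χ↔(K_n) = n-1`. -/
theorem stmt_8 (n : ℕ) (hn : 1 ≤ n) :
    (∀ D : Orient (⊤ : SimpleGraph (Fin n)), IsIOProper ⊤ D →
      ∃ v, (ioDeg (⊤ : SimpleGraph (Fin n)) D v).natAbs = n - 1) ∧
    (∃ D : Orient (⊤ : SimpleGraph (Fin n)), IsIOProper ⊤ D ∧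
      ∀ v, (ioDeg (⊤ : SimpleGraph (Fin n)) D v).natAbs ≤ n - 1) := by
  have : Nonempty (Fin n) := ⟨⟨0, hn⟩⟩
  refine ⟨fun D hD => by simpa using hD.exists_natAbs_ioDeg_eq,
    Orient.ofLT, Orient.isIOProper_ofLT, fun v => ?_⟩
  simpa using Orient.ofLT.natAbs_ioDeg_le_degree v
end

section
/- Every finite tree T admits an in-out-proper orientation D with |d_D^±(v)| ≤ 3 for all vertices v; i.e., the in-out-proper orientation number of any tree is at most 3. -/
variable {V : Type*}

/-!
Root the tree at `r` and orient it top-down. When a vertex `v` is reached, the arc to its parent is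
already fixed, contributing `p ∈ {-1, 0, 1}` to `v`, and `v` orients the arcs to all its children
at once; this fixes its own in-out-degree `t` and those (`∓1`) of its leaf children, while every
other child will in turn choose its in-out-degree different from `t`. So `v` only has to pick
`|t| ≤ 3` different from its leaf children and, unless it is a leaf, from its parent. The possible
values of `t` go in steps of `2`, and in every case at least two of them are compatible with the
leaf children, so one of them also avoids the parent.
-/

open Finset

def arcSign (b : Bool) : ℤ := if b then 1 else -1

lemma arcSign_not (b : Bool) : arcSign (!b) = -arcSign b := by
  cases b <;> rfl

lemma sum_arcSign_decide_mem {α : Type*} [DecidableEq α] {C S : Finset α} (hS : S ⊆ C) :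
    ∑ c ∈ C, arcSign (decide (c ∈ S)) = 2 * #S - #C := by
  simp only [arcSign, decide_eq_true_eq, sum_ite, sum_const,
    filter_mem_eq_inter, inter_eq_right.mpr hS]
  have := card_sdiff_add_card_eq_card hS
  rw [← this, sdiff_eq_filter]
  push_cast
  ring

lemma ioDeg_eq_sum_arcSign [Fintype V] (G : SimpleGraph V) [DecidableRel G.Adj] (D : Orient G)
    (v : V) : ioDeg G D v = ∑ u ∈ G.neighborFinset v, arcSign (D.dir u v) := by
  have hin : inDeg G D v = #{u ∈ G.neighborFinset v | D.dir u v} := by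
    simp only [inDeg, ← filter_filter, G.neighborFinset_eq_filter, SimpleGraph.adj_comm]
  have hout : outDeg G D v = #{u ∈ G.neighborFinset v | ¬ D.dir u v} := by
    simp only [outDeg, G.neighborFinset_eq_filter, filter_filter]
    congr 1
    ext u
    simp only [mem_filter, mem_univ, true_and]
    constructor
    · rintro ⟨h, hd⟩
      exact ⟨h.symm, by simp [D.consistent u v h, hd]⟩
    · rintro ⟨h, hd⟩
      exact ⟨h.symm, by simpa [D.consistent v u h] using hd⟩
  simp only [ioDeg, hin, hout, Bool.not_eq_true, arcSign, sum_ite, sum_const, Int.nsmul_eq_mul,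
    mul_one, mul_neg]
  ring

/-- `t` is a possible in-out-degree of a vertex whose parent edge contributes `p`, with `f` leaf
children and `m` other children, `a` resp. `b` of which send their arc to it. A leaf child
has in-out-degree `-1` if its arc points to the vertex and `1` otherwise, and `t` must differ from
both whenever they occur. -/
def Admissible (p : ℤ) (f m : ℕ) (t : ℤ) : Prop :=
  ∃ a ≤ f, ∃ b ≤ m, t = p + 2 * (a + b) - (f + m) ∧ |t| ≤ 3 ∧
    (0 < a → t ≠ -1) ∧ (a < f → t ≠ 1)

lemma admissible_of_count {p t : ℤ} {f m : ℕ} (k : ℕ) (hk : k ≤ f + m)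
    (ht : t = p + 2 * k - (f + m)) (hlo : -3 ≤ t) (hhi : t ≤ 3) (hone : t = 1 → f ≤ k)
    (hneg : t = -1 → k ≤ m) : Admissible p f m t := by
  have h3 : |t| ≤ 3 := abs_le.mpr ⟨hlo, hhi⟩
  by_cases h : t = -1
  · exact ⟨0, by omega, k, by omega, by omega, h3, by omega, by omega⟩
  · exact ⟨min f k, by omega, k - min f k, by omega, by omega, h3, by omega, by omega⟩

lemma exists_admissible_pair {p : ℤ} (hp : |p| ≤ 1) {f m : ℕ} (hfm : 0 < f + m) :
    ∃ t₁ t₂, t₁ ≠ t₂ ∧ Admissible p f m t₁ ∧ Admissible p f m t₂ := by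
  rw [abs_le] at hp
  obtain rfl | rfl | rfl : p = -1 ∨ p = 0 ∨ p = 1 := by omega
  all_goals obtain ⟨j, hj⟩ | ⟨j, hj⟩ := Nat.even_or_odd (f + m)
  · obtain rfl | hj2 : j = 1 ∨ 2 ≤ j := by omega
    · refine ⟨-3, 1, by norm_num, admissible_of_count 0 ?_ ?_ ?_ ?_ ?_ ?_,
        admissible_of_count 2 ?_ ?_ ?_ ?_ ?_ ?_⟩ <;> omega
    · refine ⟨-3, 3, by norm_num, admissible_of_count (j - 1) ?_ ?_ ?_ ?_ ?_ ?_,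
        admissible_of_count (j + 2) ?_ ?_ ?_ ?_ ?_ ?_⟩ <;> omega
  · refine ⟨-2, 0, by norm_num, admissible_of_count j ?_ ?_ ?_ ?_ ?_ ?_,
      admissible_of_count (j + 1) ?_ ?_ ?_ ?_ ?_ ?_⟩ <;> omega
  · refine ⟨0, 2, by norm_num, admissible_of_count j ?_ ?_ ?_ ?_ ?_ ?_,
      admissible_of_count (j + 1) ?_ ?_ ?_ ?_ ?_ ?_⟩ <;> omega
  · obtain rfl | hj1 : j = 0 ∨ 1 ≤ j := by omega
    · refine ⟨-1, 1, by norm_num, admissible_of_count 0 ?_ ?_ ?_ ?_ ?_ ?_,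
        admissible_of_count 1 ?_ ?_ ?_ ?_ ?_ ?_⟩ <;> omega
    · refine ⟨-3, 3, by norm_num, admissible_of_count (j - 1) ?_ ?_ ?_ ?_ ?_ ?_,
        admissible_of_count (j + 2) ?_ ?_ ?_ ?_ ?_ ?_⟩ <;> omega
  · obtain rfl | hj2 : j = 1 ∨ 2 ≤ j := by omega
    · refine ⟨-1, 3, by norm_num, admissible_of_count 0 ?_ ?_ ?_ ?_ ?_ ?_,
        admissible_of_count 2 ?_ ?_ ?_ ?_ ?_ ?_⟩ <;> omega
    · refine ⟨-3, 3, by norm_num, admissible_of_count (j - 2) ?_ ?_ ?_ ?_ ?_ ?_,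
        admissible_of_count (j + 1) ?_ ?_ ?_ ?_ ?_ ?_⟩ <;> omega
  · refine ⟨0, 2, by norm_num, admissible_of_count j ?_ ?_ ?_ ?_ ?_ ?_,
      admissible_of_count (j + 1) ?_ ?_ ?_ ?_ ?_ ?_⟩ <;> omega

lemma exists_admissible_ne {p : ℤ} (hp : |p| ≤ 1) (f m : ℕ) (forb : ℤ) :
    ∃ t, Admissible p f m t ∧ (0 < f + m → t ≠ forb) := by
  rcases Nat.eq_zero_or_pos (f + m) with hfm | hfm
  · rw [abs_le] at hp
    exact ⟨p, admissible_of_count 0 (by omega) (by omega) (by omega) (by omega)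
      (by omega) (by omega), by omega⟩
  obtain ⟨t₁, t₂, hne, h₁, h₂⟩ := exists_admissible_pair hp hfm
  by_cases h : t₁ = forb
  · exact ⟨t₂, h₂, fun _ => h ▸ hne.symm⟩
  · exact ⟨t₁, h₁, fun _ => h⟩

lemma exists_inward_subset {α : Type*} [DecidableEq α] (C L : Finset α) (hL : L ⊆ C) {p : ℤ}
    (hp : |p| ≤ 1) (forb : ℤ) :
    ∃ S ⊆ C, |p + (2 * #S - #C)| ≤ 3 ∧ (C.Nonempty → p + (2 * #S - #C) ≠ forb) ∧
      ∀ c ∈ L, p + (2 * #S - #C) ≠ -arcSign (decide (c ∈ S)) := by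
  obtain ⟨t, ⟨a, ha, b, hb, ht, h3, hin, hout⟩, hforb⟩ :=
    exists_admissible_ne hp #L #(C \ L) forb
  obtain ⟨A, hAL, rfl⟩ := exists_subset_card_eq ha
  obtain ⟨B, hBC, rfl⟩ := exists_subset_card_eq hb
  have hdisj : Disjoint A B :=
    disjoint_of_subset_left hAL (disjoint_of_subset_right hBC disjoint_sdiff)
  have hval : p + (2 * #(A ∪ B) - #C) = t := by
    rw [card_union_of_disjoint hdisj, ← card_sdiff_add_card_eq_card hL] at *
    push_cast
    omega
  refine ⟨A ∪ B, union_subset (hAL.trans hL) (hBC.trans sdiff_subset), hval ▸ h3,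
    fun hC => ?_, fun c hc => ?_⟩
  · have := card_sdiff_add_card_eq_card hL
    have := hC.card_pos
    exact hval ▸ hforb (by omega)
  rw [hval]
  by_cases hcA : c ∈ A
  · simpa [arcSign, hcA] using hin (card_pos.mpr ⟨c, hcA⟩)
  · have hcB : c ∉ B := fun h => (mem_sdiff.mp (hBC h)).2 hc
    simpa [arcSign, hcA, hcB] using hout (card_lt_card (ssubset_of_subset_of_ne hAL (by grind)))

def parentArc [DecidableEq V] (r v : V) (b : Bool) : ℤ := if v = r then 0 else arcSign (!b)

lemma abs_parentArc_le [DecidableEq V] (r v : V) (b : Bool) : |parentArc r v b| ≤ 1 := by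
  unfold parentArc arcSign
  split_ifs <;> simp

namespace SimpleGraph.IsTree

variable {T : SimpleGraph V}

noncomputable def pathToRoot (hT : T.IsTree) (r v : V) : T.Walk v r :=
  (hT.existsUnique_path v r).exists.choose

variable (hT : T.IsTree) (r : V)

lemma isPath_pathToRoot (v : V) : (hT.pathToRoot r v).IsPath :=
  (hT.existsUnique_path v r).exists.choose_spec

lemma eq_pathToRoot {v : V} {p : T.Walk v r} (hp : p.IsPath) : p = hT.pathToRoot r v :=
  (hT.existsUnique_path v r).unique hp (hT.isPath_pathToRoot r v)

noncomputable def parent (v : V) : V := (hT.pathToRoot r v).snd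

noncomputable def depth (v : V) : ℕ := (hT.pathToRoot r v).length

lemma parent_root : hT.parent r r = r := by
  rw [parent, ← hT.eq_pathToRoot r Walk.IsPath.nil, Walk.snd, Walk.getVert_nil]

lemma adj_parent {v : V} (hv : v ≠ r) : T.Adj v (hT.parent r v) :=
  Walk.adj_snd (Walk.not_nil_of_ne hv)

lemma depth_parent_add_one {v : V} (hv : v ≠ r) :
    hT.depth r (hT.parent r v) + 1 = hT.depth r v := by
  have hnil := Walk.not_nil_of_ne (p := hT.pathToRoot r v) hv
  rw [depth, depth, parent, ← hT.eq_pathToRoot r (hT.isPath_pathToRoot r v).tail]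
  exact Walk.length_tail_add_one hnil

lemma parent_eq_or_parent_eq_of_adj {u w : V} (h : T.Adj u w) :
    hT.parent r u = w ∨ hT.parent r w = u := by
  by_cases hw : w ∈ (hT.pathToRoot r u).support
  · exact .inl (hT.isAcyclic.eq_snd_of_adj_start (hT.isPath_pathToRoot r u) h hw).symm
  · right
    have hp : (Walk.cons h.symm (hT.pathToRoot r u)).IsPath :=
      (Walk.cons_isPath_iff _ _).mpr ⟨hT.isPath_pathToRoot r u, hw⟩
    rw [parent, ← hT.eq_pathToRoot r hp, Walk.snd_cons]

lemma parent_parent_ne {v : V} (hv : v ≠ r) : hT.parent r (hT.parent r v) ≠ v := by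
  intro h
  have hp : hT.parent r v ≠ r := fun hp => hv (by rw [← h, hp, parent_root])
  have h1 := hT.depth_parent_add_one r hv
  have h2 := hT.depth_parent_add_one r hp
  rw [h] at h2
  omega

lemma ne_root_of_parent_eq {u w : V} (h : T.Adj u w) (hu : hT.parent r u = w) : u ≠ r := by
  rintro rfl
  rw [parent_root] at hu
  exact h.ne hu

lemma parent_ne_of_parent_eq {u w : V} (h : T.Adj u w) (hu : hT.parent r u = w) :
    hT.parent r w ≠ u :=
  hu ▸ hT.parent_parent_ne r (hT.ne_root_of_parent_eq r h hu)

noncomputable section Rooted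

variable [DecidableEq V]

/-- `g v = true` orients the edge between `v` and its parent towards the parent. -/
def parentOrient (g : V → Bool) : Orient T where
  dir u w := if hT.parent r u = w then g u else !g w
  consistent u w h := by
    rcases hT.parent_eq_or_parent_eq_of_adj r h with hu | hw
    · simp [hu, hT.parent_ne_of_parent_eq r h hu]
    · simp [hw, hT.parent_ne_of_parent_eq r h.symm hw]

variable [Fintype V] [DecidableRel T.Adj]

def children (v : V) : Finset V := {c ∈ T.neighborFinset v | hT.parent r c = v}

lemma mem_children {v c : V} : c ∈ hT.children r v ↔ c ≠ r ∧ hT.parent r c = v := by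
  simp only [children, mem_filter, mem_neighborFinset]
  constructor
  · rintro ⟨h, hc⟩
    exact ⟨hT.ne_root_of_parent_eq r h.symm hc, hc⟩
  · rintro ⟨hc, rfl⟩
    exact ⟨(hT.adj_parent r hc).symm, rfl⟩

lemma filter_neighborFinset_parent_ne (v : V) :
    {u ∈ T.neighborFinset v | hT.parent r u ≠ v} = if v = r then ∅ else {hT.parent r v} := by
  ext u
  simp only [mem_filter, mem_neighborFinset]
  split_ifs with hv
  · subst hv
    simp only [notMem_empty, iff_false, not_and, not_not]
    intro h
    refine (hT.parent_eq_or_parent_eq_of_adj v h).resolve_left fun hu => ?_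
    exact h.ne (by rw [← hu, parent_root])
  · rw [mem_singleton]
    constructor
    · rintro ⟨h, hu⟩
      exact ((hT.parent_eq_or_parent_eq_of_adj r h).resolve_right hu).symm
    · rintro rfl
      exact ⟨hT.adj_parent r hv, hT.parent_parent_ne r hv⟩

lemma ioDeg_parentOrient (g : V → Bool) (v : V) :
    ioDeg T (hT.parentOrient r g) v =
      parentArc r v (g v) + ∑ c ∈ hT.children r v, arcSign (g c) := by
  rw [ioDeg_eq_sum_arcSign, ← sum_filter_add_sum_filter_not _ (hT.parent r · = v),
    filter_neighborFinset_parent_ne, add_comm]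
  congr 1
  · by_cases hv : v = r
    · simp [parentArc, hv]
    · simp [parentArc, hv, parentOrient, hT.parent_parent_ne r hv]
  · refine sum_congr rfl fun c hc => ?_
    simp [parentOrient, (mem_filter.mp hc).2]

def leafChildren (v : V) : Finset V := {c ∈ hT.children r v | hT.children r c = ∅}

def inward (v : V) (s : Bool × ℤ) : Finset V :=
  (exists_inward_subset (hT.children r v) (hT.leafChildren r v) (filter_subset _ _)
    (abs_parentArc_le r v s.1) s.2).choose

def localIoDeg (v : V) (s : Bool × ℤ) : ℤ :=
  parentArc r v s.1 + (2 * #(hT.inward r v s) - #(hT.children r v))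

lemma inward_spec (v : V) (s : Bool × ℤ) :
    hT.inward r v s ⊆ hT.children r v ∧ |hT.localIoDeg r v s| ≤ 3 ∧
      ((hT.children r v).Nonempty → hT.localIoDeg r v s ≠ s.2) ∧
      ∀ c ∈ hT.leafChildren r v,
        hT.localIoDeg r v s ≠ -arcSign (decide (c ∈ hT.inward r v s)) :=
  (exists_inward_subset (hT.children r v) (hT.leafChildren r v) (filter_subset _ _)
    (abs_parentArc_le r v s.1) s.2).choose_spec

lemma inward_subset_children (v : V) (s : Bool × ℤ) : hT.inward r v s ⊆ hT.children r v :=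
  (hT.inward_spec r v s).1

lemma abs_localIoDeg_le (v : V) (s : Bool × ℤ) : |hT.localIoDeg r v s| ≤ 3 :=
  (hT.inward_spec r v s).2.1

lemma localIoDeg_ne (v : V) (s : Bool × ℤ) (hv : (hT.children r v).Nonempty) :
    hT.localIoDeg r v s ≠ s.2 :=
  (hT.inward_spec r v s).2.2.1 hv

lemma localIoDeg_ne_of_mem_leafChildren {v c : V} (s : Bool × ℤ)
    (hc : c ∈ hT.leafChildren r v) :
    hT.localIoDeg r v s ≠ -arcSign (decide (c ∈ hT.inward r v s)) :=
  (hT.inward_spec r v s).2.2.2 c hc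

lemma localIoDeg_of_children_eq_empty {v : V} (hv : v ≠ r) (h : hT.children r v = ∅)
    (s : Bool × ℤ) : hT.localIoDeg r v s = arcSign (!s.1) := by
  have : hT.inward r v s = ∅ := subset_empty.mp (h ▸ hT.inward_subset_children r v s)
  simp [localIoDeg, parentArc, hv, h, this]

/-- `label v = (g, d)`: `g` orients the edge from `v` to its parent as in `parentOrient`, and `d`
is the in-out-degree the parent ends up with. -/
def label (v : V) : Bool × ℤ :=
  if _ : v = r then (false, 0) else
    (decide (v ∈ hT.inward r (hT.parent r v) (label (hT.parent r v))),
      hT.localIoDeg r (hT.parent r v) (label (hT.parent r v)))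
termination_by hT.depth r v
decreasing_by exact Nat.lt_of_succ_le (hT.depth_parent_add_one r ‹_›).le

lemma label_of_ne_root {v : V} (hv : v ≠ r) :
    hT.label r v = (decide (v ∈ hT.inward r (hT.parent r v) (hT.label r (hT.parent r v))),
      hT.localIoDeg r (hT.parent r v) (hT.label r (hT.parent r v))) := by
  rw [label, dif_neg hv]

def greedyOrient : Orient T := hT.parentOrient r fun v => (hT.label r v).1

lemma ioDeg_greedyOrient (v : V) :
    ioDeg T (hT.greedyOrient r) v = hT.localIoDeg r v (hT.label r v) := by
  rw [greedyOrient, ioDeg_parentOrient, localIoDeg,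
    ← sum_arcSign_decide_mem (hT.inward_subset_children r v _)]
  refine congrArg _ (sum_congr rfl fun c hc => ?_)
  obtain ⟨hcr, rfl⟩ := (hT.mem_children r).mp hc
  rw [hT.label_of_ne_root r hcr]

lemma ioDeg_greedyOrient_ne_of_parent_eq {u w : V} (h : T.Adj u w) (hw : hT.parent r w = u) :
    ioDeg T (hT.greedyOrient r) u ≠ ioDeg T (hT.greedyOrient r) w := by
  have hwr : w ≠ r := hT.ne_root_of_parent_eq r h.symm hw
  have hwu : w ∈ hT.children r u := (hT.mem_children r).mpr ⟨hwr, hw⟩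
  have hlabel := hT.label_of_ne_root r hwr
  rw [hw] at hlabel
  rw [hT.ioDeg_greedyOrient, hT.ioDeg_greedyOrient]
  rcases (hT.children r w).eq_empty_or_nonempty with hleaf | hint
  · rw [hT.localIoDeg_of_children_eq_empty r hwr hleaf, hlabel, arcSign_not]
    exact hT.localIoDeg_ne_of_mem_leafChildren r (hT.label r u) (mem_filter.mpr ⟨hwu, hleaf⟩)
  · have := hT.localIoDeg_ne r w (hT.label r w) hint
    rw [hlabel] at this ⊢
    exact this.symm

lemma isIOProper_greedyOrient : IsIOProper T (hT.greedyOrient r) := fun _ _ h =>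
  (hT.parent_eq_or_parent_eq_of_adj r h).elim
    (fun hu => (hT.ioDeg_greedyOrient_ne_of_parent_eq r h.symm hu).symm)
    (hT.ioDeg_greedyOrient_ne_of_parent_eq r h)

lemma abs_ioDeg_greedyOrient_le (v : V) : |ioDeg T (hT.greedyOrient r) v| ≤ 3 := by
  rw [ioDeg_greedyOrient]
  exact hT.abs_localIoDeg_le r v _

end Rooted

end SimpleGraph.IsTree

/-- Every finite tree admits an in-out-proper orientation with all absolute
in-out-degrees at most `3`; i.e. `χ↔(T) ≤ 3`. -/
theorem stmt_9 [Fintype V] (T : SimpleGraph V) [DecidableRel T.Adj] (hT : T.IsTree) :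
    ∃ D : Orient T, IsIOProper T D ∧ ∀ v, |ioDeg T D v| ≤ 3 := by
  classical
  obtain ⟨r⟩ := hT.connected.nonempty
  exact ⟨hT.greedyOrient r, hT.isIOProper_greedyOrient r, hT.abs_ioDeg_greedyOrient_le r⟩
end
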